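/- Let A be a clone over ℕ, B a right A-algebra, and Λ : B → B an abstract binding operation on x_1. For i ∈ ℕ define 𝛌x_i.b := Λ(b[s]) where s(j) = x_{j+1} for j ≠ i and s(i) = x_1 (i.e. the sequence (x_2, x_3, …, x_i, x_1, x_{i+2}, x_{i+3}, …)). Then for each i ∈ ℕ, the map b ↦ 𝛌x_i.b is a binding operation on x_i. -/
import Mathlib


/-- A clone over the positive integers ℕ = {1,2,3,…}. -/
structure CloneN (A : Type*) where
  sub : A → (ℕ+ → A) → A
  x : ℕ+ → A
  sub_assoc : ∀ (a : A) (f g : ℕ+ → A), sub (sub a f) g = sub a (fun i => sub (f i) g)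
  sub_x : ∀ a : A, sub a x = a
  x_sub : ∀ (i : ℕ+) (f : ℕ+ → A), sub (x i) f = f i

/-- A right algebra of a clone over ℕ. -/
structure RightAlgOn (A : Type*) (C : CloneN A) (B : Type*) where
  act : B → (ℕ+ → A) → B
  act_act : ∀ (b : B) (f g : ℕ+ → A), act (act b f) g = act b (fun i => C.sub (f i) g)
  act_x : ∀ b : B, act b C.x = b

/-- The sequence defining `b^{+i}`. -/
def plusSeq {A : Type*} (C : CloneN A) (i : ℕ+) : ℕ+ → A :=
  fun j => if j < i then C.x j else C.x (j + 1)

/-- The sequence defining `b^{−i}`. -/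
def minusSeq {A : Type*} (C : CloneN A) (i : ℕ+) : ℕ+ → A :=
  fun j => if j ≤ i then C.x j else C.x (j - 1)

/-- `Λ : B → B` is an abstract binding operation on `x_1`:
`(Λb)[f] = Λ(b[g])` with `g(1) = x_1`, `g(j+1) = (f j)⁺`. -/
def IsAbsBinding1 {A B : Type*} (C : CloneN A) (R : RightAlgOn A C B)
    (L : B → B) : Prop :=
  ∀ (b : B) (f : ℕ+ → A),
    R.act (L b) f = L (R.act b (fun j =>
      if j = 1 then C.x 1 else C.sub (f (j - 1)) (fun k => C.x (k + 1))))

/-- `M : B → B` is a binding operation on `x_i`: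
`(Mb)[f] = (M(b[h]))^{−i}` where `h(j) = (f j)^{+i}` for `j ≠ i`, `h(i) = x_i`. -/
def IsBinding {A B : Type*} (C : CloneN A) (R : RightAlgOn A C B) (i : ℕ+)
    (M : B → B) : Prop :=
  ∀ (b : B) (f : ℕ+ → A),
    R.act (M b) f =
      R.act (M (R.act b (fun j =>
        if j = i then C.x i else C.sub (f j) (plusSeq C i)))) (minusSeq C i)

/-- `𝛌x_i.b := Λ(b[s])` where `s(i) = x_1` and `s(j) = x_{j+1}` for `j ≠ i`. -/
def lamAt {A B : Type*} (C : CloneN A) (R : RightAlgOn A C B) (L : B → B)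
    (i : ℕ+) (b : B) : B :=
  L (R.act b (fun j => if j = i then C.x 1 else C.x (j + 1)))

/-- For an abstract binding operation `Λ` on `x_1`, each derived operation
`b ↦ 𝛌x_i.b` is a binding operation on `x_i`. -/
theorem lamAt_is_binding {A B : Type*} (C : CloneN A) (R : RightAlgOn A C B)
    (L : B → B) (hL : IsAbsBinding1 C R L) (i : ℕ+) :
    IsBinding C R i (fun b => lamAt C R L i b) := by
  intro b f
  simp only [lamAt]
  rw [hL, hL, R.act_act, R.act_act, R.act_act]
  congr 1
  congr 1
  funext j
  by_cases hj : j = i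
  · subst hj
    simp [C.x_sub]
  · have hj1 : j + 1 ≠ (1 : ℕ+) := by
      intro h
      exact absurd (congrArg (·.val) h) (by simp [PNat.add_coe])
    have hjm : j + 1 - 1 = j := by
      apply PNat.eq
      simp [PNat.sub_coe]
    simp only [if_neg hj, C.x_sub, if_neg hj1, hjm, C.sub_assoc]
    congr 1
    funext k
    by_cases hk : k < i
    · have hki : k ≠ i := ne_of_lt hk
      have hk1 : k + 1 ≠ (1 : ℕ+) := by
        intro h
        exact absurd (congrArg (·.val) h) (by simp [PNat.add_coe])
      have hkm : k + 1 - 1 = k := by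
        apply PNat.eq
        simp [PNat.sub_coe]
      simp [plusSeq, minusSeq, hk, hki, C.x_sub, hk1, hkm, le_of_lt hk]
    · push_neg at hk
      have hki : k + 1 ≠ i := by
        intro h
        exact (lt_of_le_of_lt hk (PNat.lt_add_right k 1)).ne' h
      have hk1 : k + 1 + 1 ≠ (1 : ℕ+) := by
        intro h
        exact absurd (congrArg (·.val) h) (by simp [PNat.add_coe])
      have hkm : k + 1 + 1 - 1 = k + 1 := by
        apply PNat.eq
        simp [PNat.sub_coe]
      have hkn : ¬ k + 1 ≤ i := not_le.mpr (lt_of_le_of_lt hk (PNat.lt_add_right k 1))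
      simp [plusSeq, minusSeq, not_lt.mpr hk, hki, C.x_sub, hk1, hkm, hkn]
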